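/- arXiv:2302.06326 — 8 statements merged into one kernel-verified Lean document; each statement's English description precedes it below -/
import Mathlib

section
/- Let λ₂,…,λ_n > 0, α > 0, let Λ = diag(λ₂,…,λ_n), and let W ∈ ℝ^{n×n} be symmetric. Define for i,j with at least one index > 1: χ_{i,j} = (λ_i − λ_j)² + 2α²(λ_i + λ_j) (with λ₁ = 0), and ρ_i = 2α² + λ_i. Then the matrices S, G, R with entries s_{i,1} = ρ_{i+1}^{-1} W_{i+1,1} (1 ≤ i ≤ n−1), s_{i−1,j} = ((λ_i − λ_j)/χ_{i,j}) W_{i,j} (2 ≤ i,j ≤ n), g_{i−1,j−1} = (2α/χ_{i,j}) W_{i,j} (2 ≤ i,j ≤ n), r_{1,1} = W_{1,1}/(2α), r_{i,j} = (α(λ_i+λ_j)/χ_{i,j}) W_{i,j} ((i,j) ≠ (1,1)) satisfy the three coupled equations: S A₂₂ᵀ + A₂₂ Sᵀ = 0; G A₂₃ᵀ + S A₂₄ᵀ + A₂₂ R = 0; Sᵀ A₂₃ᵀ + R A₂₄ᵀ + A₂₃ S + A₂₄ R = −W, where A₂₂ = [0 I_{n−1}], A₂₃ᵀ = [0 −Λ],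 A₂₄ = −α I_n. -/
/-!
With `A₂₂ = [0 I]` and `A₂₃ = -diag(λ) A₂₂ᵀ`, every product in the three equations only shifts an
index or scales by some `λᵢ`, so the equations can be checked entry by entry. Away from the first
row and column each entry collapses to the definition of `χᵢⱼ`; e.g. the `(i, j)` entry of the third
equation is `-(λᵢ(λᵢ - λⱼ) + λⱼ(λⱼ - λᵢ) + 2α²(λᵢ + λⱼ)) Wᵢⱼ / χᵢⱼ = -Wᵢⱼ`. On the first row and
column (index `0` in the code) one uses `χᵢ₁ = λᵢ ρᵢ` instead, since `λ₁ = 0`.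
-/

open Matrix

namespace SwingLyapunov

section TailProj

variable {R ι : Type*} [NonAssocSemiring R] {n : ℕ}

variable (R n) in
/-- The block matrix `[0 Iₙ]`, i.e. `A₂₂`. -/
def tailProj : Matrix (Fin n) (Fin (n + 1)) R := of fun i j => if j = i.succ then 1 else 0

@[simp]
theorem tailProj_mul_apply (M : Matrix (Fin (n + 1)) ι R) (i : Fin n) (j : ι) :
    (tailProj R n * M) i j = M i.succ j := by
  simp [tailProj, mul_apply, ite_mul]

@[simp]
theorem mul_tailProj_transpose_apply (M : Matrix ι (Fin (n + 1)) R) (i : ι) (k : Fin n) :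
    (M * (tailProj R n)ᵀ) i k = M i k.succ := by
  simp [tailProj, mul_apply, mul_ite]

@[simp]
theorem mul_tailProj_apply_zero (M : Matrix ι (Fin n) R) (i : ι) : (M * tailProj R n) i 0 = 0 := by
  simp [tailProj, mul_apply, (Fin.succ_ne_zero _).symm]

@[simp]
theorem mul_tailProj_apply_succ (M : Matrix ι (Fin n) R) (i : ι) (k : Fin n) :
    (M * tailProj R n) i k.succ = M i k := by
  simp [tailProj, mul_apply]

@[simp]
theorem tailProj_transpose_mul_apply_zero (M : Matrix (Fin n) ι R) (j : ι) :
    ((tailProj R n)ᵀ * M) 0 j = 0 := by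
  simp [tailProj, mul_apply, (Fin.succ_ne_zero _).symm]

@[simp]
theorem tailProj_transpose_mul_apply_succ (M : Matrix (Fin n) ι R) (k : Fin n) (j : ι) :
    ((tailProj R n)ᵀ * M) k.succ j = M k j := by
  simp [tailProj, mul_apply]

theorem diagonal_mul_tailProj_transpose (d : Fin (n + 1) → R) :
    diagonal d * (tailProj R n)ᵀ = of fun j i => if j = i.succ then d j else 0 := by
  ext j i
  simp [tailProj, diagonal, mul_apply]

end TailProj

noncomputable section Solution

variable {n : ℕ} (α : ℝ) (lam : Fin (n + 1) → ℝ) (W : Matrix (Fin (n + 1)) (Fin (n + 1)) ℝ)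

def chi (i j : Fin (n + 1)) : ℝ := (lam i - lam j) ^ 2 + 2 * α ^ 2 * (lam i + lam j)

def lyapS : Matrix (Fin n) (Fin (n + 1)) ℝ :=
  of fun i j =>
    if j = 0 then (2 * α ^ 2 + lam i.succ)⁻¹ * W i.succ 0
    else ((lam i.succ - lam j) / chi α lam i.succ j) * W i.succ j

def lyapG : Matrix (Fin n) (Fin n) ℝ :=
  of fun i j => (2 * α / chi α lam i.succ j.succ) * W i.succ j.succ

def lyapR : Matrix (Fin (n + 1)) (Fin (n + 1)) ℝ :=
  of fun i j =>
    if i = 0 ∧ j = 0 then W 0 0 / (2 * α)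
    else (α * (lam i + lam j) / chi α lam i j) * W i j

variable {α lam W}

theorem chi_comm (i j : Fin (n + 1)) : chi α lam i j = chi α lam j i := by
  unfold chi; ring

theorem chi_zero_right (h0 : lam 0 = 0) (i : Fin (n + 1)) :
    chi α lam i 0 = lam i * (2 * α ^ 2 + lam i) := by
  unfold chi; rw [h0]; ring

theorem chi_pos (hα : α ≠ 0) {i j : Fin (n + 1)} (hi : 0 < lam i) (hj : 0 ≤ lam j) :
    0 < chi α lam i j := by
  unfold chi; positivity

theorem mul_div_chi_zero_right (h0 : lam 0 = 0) {i : Fin (n + 1)} (hi : lam i ≠ 0) (c : ℝ) :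
    c * (lam i + lam 0) / chi α lam i 0 = c / (2 * α ^ 2 + lam i) := by
  rw [chi_zero_right h0, h0, add_zero, mul_comm c, mul_div_mul_left _ _ hi]

theorem lyapS_mul_tailProj_transpose_add (hW : W.IsSymm) :
    lyapS α lam W * (tailProj ℝ n)ᵀ + tailProj ℝ n * (lyapS α lam W)ᵀ = 0 := by
  ext i k
  rw [Matrix.add_apply, mul_tailProj_transpose_apply, tailProj_mul_apply, transpose_apply]
  simp only [lyapS, of_apply, Fin.succ_ne_zero, if_false, Matrix.zero_apply, chi_comm k.succ,
    hW.apply i.succ k.succ]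
  ring

theorem lyapG_mul_add (h0 : lam 0 = 0) (hlam : ∀ i, i ≠ 0 → lam i ≠ 0) :
    lyapG α lam W * (diagonal (-lam) * (tailProj ℝ n)ᵀ)ᵀ +
      lyapS α lam W * ((-α) • (1 : Matrix (Fin (n + 1)) (Fin (n + 1)) ℝ))ᵀ +
      tailProj ℝ n * lyapR α lam W = 0 := by
  rw [transpose_mul, transpose_transpose, diagonal_transpose, ← Matrix.mul_assoc, transpose_smul,
    transpose_one, Matrix.mul_smul, Matrix.mul_one]
  ext i j
  rw [Matrix.add_apply, Matrix.add_apply, mul_diagonal, Matrix.smul_apply, tailProj_mul_apply]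
  cases j using Fin.cases with
  | zero =>
    simp only [mul_tailProj_apply_zero, lyapS, lyapR, of_apply, Fin.succ_ne_zero, false_and,
      if_true, if_false, Matrix.zero_apply, mul_div_chi_zero_right h0 (hlam _ (Fin.succ_ne_zero i))]
    ring
  | succ m =>
    simp only [mul_tailProj_apply_succ, lyapG, lyapS, lyapR, of_apply, Fin.succ_ne_zero, false_and,
      if_false, Matrix.zero_apply, Pi.neg_apply, smul_eq_mul]
    ring

theorem lyapS_transpose_mul_add (hα : α ≠ 0) (h0 : lam 0 = 0) (hlam : ∀ i, i ≠ 0 → 0 < lam i)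
    (hW : W.IsSymm) :
    (lyapS α lam W)ᵀ * (diagonal (-lam) * (tailProj ℝ n)ᵀ)ᵀ +
      lyapR α lam W * ((-α) • (1 : Matrix (Fin (n + 1)) (Fin (n + 1)) ℝ))ᵀ +
      diagonal (-lam) * (tailProj ℝ n)ᵀ * lyapS α lam W +
      (-α) • (1 : Matrix (Fin (n + 1)) (Fin (n + 1)) ℝ) * lyapR α lam W = -W := by
  have hρ (k : Fin n) : 2 * α ^ 2 + lam k.succ ≠ 0 := by
    have := hlam k.succ (Fin.succ_ne_zero k)
    positivity
  rw [transpose_mul, transpose_transpose, diagonal_transpose, ← Matrix.mul_assoc (lyapS α lam W)ᵀ,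
    Matrix.mul_assoc (diagonal _), transpose_smul, transpose_one, Matrix.mul_smul, Matrix.mul_one,
    Matrix.smul_mul, Matrix.one_mul]
  ext i j
  simp only [Matrix.add_apply, mul_diagonal, diagonal_mul, Matrix.smul_apply, Matrix.neg_apply,
    Pi.neg_apply, smul_eq_mul]
  cases i using Fin.cases with
  | zero =>
    cases j using Fin.cases with
    | zero =>
      simp only [mul_tailProj_apply_zero, tailProj_transpose_mul_apply_zero, lyapR, of_apply,
        and_self, if_true]
      field_simp
      ring
    | succ m =>
      simp only [mul_tailProj_apply_succ, tailProj_transpose_mul_apply_zero, transpose_apply, lyapS,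
        lyapR, of_apply, Fin.succ_ne_zero, and_false, if_true, if_false, chi_comm 0, add_comm (lam 0),
        mul_div_chi_zero_right h0 (hlam _ (Fin.succ_ne_zero m)).ne', hW.apply 0 m.succ]
      linear_combination (-W 0 m.succ) * mul_inv_cancel₀ (hρ m)
  | succ k =>
    cases j using Fin.cases with
    | zero =>
      simp only [mul_tailProj_apply_zero, tailProj_transpose_mul_apply_succ, lyapS,
        lyapR, of_apply, Fin.succ_ne_zero, false_and, if_true, if_false,
        mul_div_chi_zero_right h0 (hlam _ (Fin.succ_ne_zero k)).ne']
      linear_combination (-W k.succ 0) * mul_inv_cancel₀ (hρ k)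
    | succ m =>
      have hχ : chi α lam k.succ m.succ ≠ 0 :=
        (chi_pos hα (hlam _ (Fin.succ_ne_zero k)) (hlam _ (Fin.succ_ne_zero m)).le).ne'
      simp only [mul_tailProj_apply_succ, tailProj_transpose_mul_apply_succ, transpose_apply, lyapS,
        lyapR, of_apply, Fin.succ_ne_zero, false_and, if_false, chi_comm m.succ,
        hW.apply m.succ k.succ]
      field_simp
      unfold chi
      ring

end Solution

end SwingLyapunov

/-- Explicit solution of the reduced Lyapunov equations for the linearized swing dynamics
with uniform damping-inertia ratio `α`: the matrices `S`, `G`, `R` with the stated entries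
satisfy the three coupled block equations. -/
theorem stmt_6 (n : ℕ) (α : ℝ) (hα : 0 < α)
    (lam : Fin (n + 1) → ℝ) (hlam0 : lam 0 = 0)
    (hlam : ∀ i : Fin (n + 1), i ≠ 0 → 0 < lam i)
    (W : Matrix (Fin (n + 1)) (Fin (n + 1)) ℝ) (hW : W.IsSymm) :
    let χ : Fin (n + 1) → Fin (n + 1) → ℝ :=
      fun i j => (lam i - lam j) ^ 2 + 2 * α ^ 2 * (lam i + lam j)
    let ρ : Fin (n + 1) → ℝ := fun i => 2 * α ^ 2 + lam i
    let S : Matrix (Fin n) (Fin (n + 1)) ℝ :=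
      Matrix.of fun i j =>
        if j = 0 then (ρ i.succ)⁻¹ * W i.succ 0
        else ((lam i.succ - lam j) / χ i.succ j) * W i.succ j
    let G : Matrix (Fin n) (Fin n) ℝ :=
      Matrix.of fun i j => (2 * α / χ i.succ j.succ) * W i.succ j.succ
    let R : Matrix (Fin (n + 1)) (Fin (n + 1)) ℝ :=
      Matrix.of fun i j =>
        if i = 0 ∧ j = 0 then W 0 0 / (2 * α)
        else (α * (lam i + lam j) / χ i j) * W i j
    let A22 : Matrix (Fin n) (Fin (n + 1)) ℝ :=
      Matrix.of fun i j => if j = i.succ then 1 else 0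
    let A23 : Matrix (Fin (n + 1)) (Fin n) ℝ :=
      Matrix.of fun j i => if j = i.succ then -lam j else 0
    let A24 : Matrix (Fin (n + 1)) (Fin (n + 1)) ℝ := (-α) • (1 : Matrix (Fin (n + 1)) (Fin (n + 1)) ℝ)
    S * A22ᵀ + A22 * Sᵀ = 0 ∧
    G * A23ᵀ + S * A24ᵀ + A22 * R = 0 ∧
    Sᵀ * A23ᵀ + R * A24ᵀ + A23 * S + A24 * R = -W := by
  intro χ ρ S G R A22 A23 A24
  have hA23 : A23 = diagonal (-lam) * (SwingLyapunov.tailProj ℝ n)ᵀ :=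
    (SwingLyapunov.diagonal_mul_tailProj_transpose _).symm
  rw [hA23]
  exact ⟨SwingLyapunov.lyapS_mul_tailProj_transpose_add hW,
    SwingLyapunov.lyapG_mul_add hlam0 fun i hi => (hlam i hi).ne',
    SwingLyapunov.lyapS_transpose_mul_add hα.ne' hlam0 hlam hW⟩
end

section
/- Under the assumptions M = η I_n and D = d I_n with η, d > 0, the trace of the asymptotic variance matrix of the frequency in the linearized stochastic swing system satisfies tr(Q_ω) = tr(B̃²)/(2dη), independently of the network Laplacian L. -/
open Matrix

/-!
Only the diagonal of `R` enters the trace, and on the diagonal every modal gain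
`α (λᵢ + λᵢ) / χᵢᵢ = 2αλᵢ / (4α²λᵢ)` equals `1 / (2α)`, whatever the eigenvalue `λᵢ` of the
Laplacian is. Hence `tr R = tr W / (2α)`, and conjugation by the orthogonal `U` preserves traces,
so `tr W = tr B̃² / η` and `tr Qω = tr R / η`.
-/

theorem Matrix.trace_mul_mul_eq_of_mul_eq_one {m n R : Type*} [Fintype m] [Fintype n]
    [DecidableEq n] [CommSemiring R] {U : Matrix m n R} {V : Matrix n m R} (hVU : V * U = 1)
    (A : Matrix n n R) : (U * A * V).trace = A.trace := by
  rw [trace_mul_cycle, hVU, one_mul]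

lemma modal_gain_self {α l : ℝ} (hα : α ≠ 0) (hl : l ≠ 0) :
    α * (l + l) / ((l - l) ^ 2 + 2 * α ^ 2 * (l + l)) = 1 / (2 * α) := by
  field_simp
  ring

theorem stmt_7_general (n : ℕ) (η d : ℝ) (hη : 0 < η) (hd : 0 < d)
    (b : Fin (n + 1) → ℝ)
    (U : Matrix (Fin (n + 1)) (Fin (n + 1)) ℝ)
    (hU1 : U * Uᵀ = 1) (hU2 : Uᵀ * U = 1)
    (lam : Fin (n + 1) → ℝ)
    (hlampos : ∀ i : Fin (n + 1), i ≠ 0 → 0 < lam i) :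
    let α := d / η
    let W := Uᵀ * ((1 / η) • Matrix.diagonal fun i => (b i) ^ 2) * U
    let χ : Fin (n + 1) → Fin (n + 1) → ℝ :=
      fun i j => (lam i - lam j) ^ 2 + 2 * α ^ 2 * (lam i + lam j)
    let R : Matrix (Fin (n + 1)) (Fin (n + 1)) ℝ :=
      Matrix.of fun i j =>
        if i = 0 ∧ j = 0 then W 0 0 / (2 * α)
        else (α * (lam i + lam j) / χ i j) * W i j
    let Qω := (1 / η) • (U * R * Uᵀ)
    Qω.trace = (∑ i, (b i) ^ 2) / (2 * d * η) := by
  intro α W χ R Qω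
  have hα : α ≠ 0 := (div_pos hd hη).ne'
  have hR_diag (i : Fin (n + 1)) : R i i = W i i / (2 * α) := by
    by_cases hi : i = 0
    · simp [R, hi]
    · simp only [R, χ, of_apply, hi, and_self, if_false,
        modal_gain_self hα (hlampos i hi).ne']
      ring
  have hR_trace : R.trace = W.trace / (2 * α) := by
    simp only [trace, diag, Finset.sum_div, hR_diag]
  have hW_trace : W.trace = (1 / η) * ∑ i, (b i) ^ 2 := by
    rw [trace_mul_mul_eq_of_mul_eq_one hU1, trace_smul, trace_diagonal, smul_eq_mul]
  rw [trace_smul, trace_mul_mul_eq_of_mul_eq_one hU2, hR_trace, hW_trace, smul_eq_mul]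
  simp only [α]
  field_simp

/-- With uniform inertia `M = ηI` and damping `D = dI`, the trace of the asymptotic
frequency variance matrix is `tr(B̃²)/(2dη)`, independently of the Laplacian `L`. -/
theorem stmt_7 (n : ℕ) (η d : ℝ) (hη : 0 < η) (hd : 0 < d)
    (b : Fin (n + 1) → ℝ) (hb : ∀ i, 0 < b i)
    (L U : Matrix (Fin (n + 1)) (Fin (n + 1)) ℝ) (hLsymm : L.IsSymm)
    (hU1 : U * Uᵀ = 1) (hU2 : Uᵀ * U = 1)
    (lam : Fin (n + 1) → ℝ)
    (hdiag : Uᵀ * ((1 / η) • L) * U = Matrix.diagonal lam)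
    (hlam0 : lam 0 = 0) (hlampos : ∀ i : Fin (n + 1), i ≠ 0 → 0 < lam i) :
    let α := d / η
    let W := Uᵀ * ((1 / η) • Matrix.diagonal fun i => (b i) ^ 2) * U
    let χ : Fin (n + 1) → Fin (n + 1) → ℝ :=
      fun i j => (lam i - lam j) ^ 2 + 2 * α ^ 2 * (lam i + lam j)
    let R : Matrix (Fin (n + 1)) (Fin (n + 1)) ℝ :=
      Matrix.of fun i j =>
        if i = 0 ∧ j = 0 then W 0 0 / (2 * α)
        else (α * (lam i + lam j) / χ i j) * W i j
    let Qω := (1 / η) • (U * R * Uᵀ)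
    Qω.trace = (∑ i, (b i) ^ 2) / (2 * d * η) :=
  stmt_7_general n η d hη hd b U hU1 hU2 lam hlampos
end

section
/- For the linearized stochastic swing system on the complete graph with n nodes, M = ηI, D = dI, all line weights equal to γ > 0, the variance of the frequency at node i in the invariant distribution is q_{ω,ii} = [1/(2dη) − γ(n−1)/(d n(2d² + γηn))] b_i² + [γ/(d n(2d² + γηn))](tr(B̃²) − b_i²). -/
open Matrix

theorem Matrix.of_const_mul_diagonal_mul_of_const_apply {m R : Type*} [Fintype m] [DecidableEq m]
    [CommSemiring R] (c : R) (v : m → R) (i j : m) :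
    (of (fun _ _ => c) * diagonal v * of (fun _ _ => c) : Matrix m m R) i j = c ^ 2 * ∑ k, v k := by
  rw [mul_apply, Finset.mul_sum]
  simp only [mul_diagonal, of_apply]
  exact Finset.sum_congr rfl fun _ _ => by ring

theorem stmt_8_general (n : ℕ) (η d γ : ℝ) (hη : 0 < η) (hd : 0 < d) (hγ : 0 < γ)
    (b : Fin n → ℝ) :
    let α := d / η
    let B2 : Matrix (Fin n) (Fin n) ℝ := Matrix.diagonal fun i => (b i) ^ 2
    let J : Matrix (Fin n) (Fin n) ℝ := Matrix.of fun _ _ => 1 / (n : ℝ)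
    let Qω : Matrix (Fin n) (Fin n) ℝ :=
      (1 / η ^ 2) • ((1 / (2 * α)) • B2
        + (α / (2 * α ^ 2 + γ * n / η) - 1 / (2 * α)) • (J * B2 + B2 * J)
        + (1 / α - 2 * α / (2 * α ^ 2 + γ * n / η)) • (J * B2 * J))
    ∀ i, Qω i i =
      (1 / (2 * d * η) - γ * ((n : ℝ) - 1) / (d * n * (2 * d ^ 2 + γ * η * n))) * (b i) ^ 2
      + (γ / (d * n * (2 * d ^ 2 + γ * η * n))) * ((∑ j, (b j) ^ 2) - (b i) ^ 2) := by
  intro α B2 J Qω i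
  have hn : (0 : ℝ) < n := by exact_mod_cast i.pos
  have hden : 2 * d ^ 2 + γ * η * n ≠ 0 := by positivity
  simp only [Qω, α, B2, J, Matrix.smul_apply, Matrix.add_apply, mul_diagonal, diagonal_mul,
    diagonal_apply_eq, of_apply, of_const_mul_diagonal_mul_of_const_apply, smul_eq_mul]
  field_simp
  ring

/-- Frequency variance at node `i` of the linearized stochastic swing system on the
complete graph with uniform line weight `γ`, `M = ηI`, `D = dI`. -/
theorem stmt_8 (n : ℕ) (hn : 2 ≤ n) (η d γ : ℝ) (hη : 0 < η) (hd : 0 < d) (hγ : 0 < γ)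
    (b : Fin n → ℝ) :
    let α := d / η
    let B2 : Matrix (Fin n) (Fin n) ℝ := Matrix.diagonal fun i => (b i) ^ 2
    let J : Matrix (Fin n) (Fin n) ℝ := Matrix.of fun _ _ => 1 / (n : ℝ)
    let Qω : Matrix (Fin n) (Fin n) ℝ :=
      (1 / η ^ 2) • ((1 / (2 * α)) • B2
        + (α / (2 * α ^ 2 + γ * n / η) - 1 / (2 * α)) • (J * B2 + B2 * J)
        + (1 / α - 2 * α / (2 * α ^ 2 + γ * n / η)) • (J * B2 * J))
    ∀ i, Qω i i =
      (1 / (2 * d * η) - γ * ((n : ℝ) - 1) / (d * n * (2 * d ^ 2 + γ * η * n))) * (b i) ^ 2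
      + (γ / (d * n * (2 * d ^ 2 + γ * η * n))) * ((∑ j, (b j) ^ 2) - (b i) ^ 2) :=
  stmt_8_general n η d γ hη hd hγ b
end

section
/- For q_{ω,ii}(n) = b_i²/(2dη) − (n−1)γ b_i²/(d n(2d² + γηn)), the derivative with respect to n satisfies ∂q_{ω,ii}/∂n = γ(γηn² − 2γηn − 2d²) b_i²/(d(2d²n + γηn²)²), which is strictly positive whenever n > 1 + √(1 + 2d²/(γη)). Also ∂q_{ω,jj}/∂n = −γ(2d² + 2γηn)b_i²/(d(2d²n + γηn²)²) < 0 for q_{ω,jj}(n) = γ b_i²/(dn(2d²+γηn)). -/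
/-! Both variances are rational functions of `n` whose denominator is `D(n) = d n (2d² + γηn)`,
so the derivatives follow from the quotient rule, with `D'(n) = d (2d² + 2γηn)` and
`D(n)² = d² (2d²n + γηn²)²`. The numerator of `∂q_{ω,ii}/∂n` is the quadratic
`γη(n - 1)² - (γη + 2d²)`, positive exactly beyond its larger root `1 + √(1 + 2d²/(γη))`. -/

section QuadraticDenominator

variable {a c d : ℝ}

theorem hasDerivAt_mul_id_mul_linear (n : ℝ) :
    HasDerivAt (fun x : ℝ => d * x * (a + c * x)) (d * (a + 2 * c * n)) n := by
  have hdx : HasDerivAt (fun x : ℝ => d * x) d n := by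
    simpa using (hasDerivAt_id n).const_mul d
  have hlin : HasDerivAt (fun x : ℝ => a + c * x) c n := by
    simpa using ((hasDerivAt_id n).const_mul c).const_add a
  refine (hdx.mul hlin).congr_deriv ?_
  ring

theorem hasDerivAt_const_div_mul_id_mul_linear (k : ℝ) {n : ℝ} (hD : d * n * (a + c * n) ≠ 0) :
    HasDerivAt (fun x : ℝ => k / (d * x * (a + c * x)))
      (-(k * (a + 2 * c * n)) / (d * (a * n + c * n ^ 2) ^ 2)) n := by
  refine ((hasDerivAt_const n k).div (hasDerivAt_mul_id_mul_linear n) hD).congr_deriv ?_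
  have hd : d ≠ 0 := left_ne_zero_of_mul (left_ne_zero_of_mul hD)
  field_simp
  ring

theorem hasDerivAt_const_sub_sub_one_mul_div_mul_id_mul_linear (e k : ℝ) {n : ℝ}
    (hD : d * n * (a + c * n) ≠ 0) :
    HasDerivAt (fun x : ℝ => e - (x - 1) * k / (d * x * (a + c * x)))
      (k * (c * n ^ 2 - 2 * c * n - a) / (d * (a * n + c * n ^ 2) ^ 2)) n := by
  have hnum : HasDerivAt (fun x : ℝ => (x - 1) * k) k n := by
    simpa using ((hasDerivAt_id n).sub_const 1).mul_const k
  refine ((hasDerivAt_const n e).sub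
    (hnum.div (hasDerivAt_mul_id_mul_linear n) hD)).congr_deriv ?_
  have hd : d ≠ 0 := left_ne_zero_of_mul (left_ne_zero_of_mul hD)
  field_simp
  ring

end QuadraticDenominator

theorem quadratic_pos_of_one_add_sqrt_lt {a c n : ℝ} (hc : 0 < c)
    (hn : 1 + Real.sqrt (1 + a / c) < n) : 0 < c * n ^ 2 - 2 * c * n - a := by
  have hsq : 1 + a / c < (n - 1) ^ 2 :=
    (Real.sqrt_lt' (by linarith [Real.sqrt_nonneg (1 + a / c)])).1 (by linarith)
  have ha : a < ((n - 1) ^ 2 - 1) * c := (div_lt_iff₀ hc).1 (by linarith)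
  linarith [show ((n - 1) ^ 2 - 1) * c = c * n ^ 2 - 2 * c * n by ring]

/-- Derivatives with respect to the (real) network size `n` of the complete-graph
frequency variances with a single disturbance at node `i`, and their signs. -/
theorem stmt_13 (d η γ b n : ℝ) (hd : 0 < d) (hη : 0 < η) (hγ : 0 < γ)
    (hb : b ≠ 0) (hn : 1 < n) :
    HasDerivAt (fun x : ℝ =>
        b ^ 2 / (2 * d * η) - (x - 1) * γ * b ^ 2 / (d * x * (2 * d ^ 2 + γ * η * x)))
      (γ * (γ * η * n ^ 2 - 2 * γ * η * n - 2 * d ^ 2) * b ^ 2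
        / (d * (2 * d ^ 2 * n + γ * η * n ^ 2) ^ 2)) n ∧
    (1 + Real.sqrt (1 + 2 * d ^ 2 / (γ * η)) < n →
      0 < γ * (γ * η * n ^ 2 - 2 * γ * η * n - 2 * d ^ 2) * b ^ 2
        / (d * (2 * d ^ 2 * n + γ * η * n ^ 2) ^ 2)) ∧
    HasDerivAt (fun x : ℝ => γ * b ^ 2 / (d * x * (2 * d ^ 2 + γ * η * x)))
      (-(γ * (2 * d ^ 2 + 2 * γ * η * n) * b ^ 2
        / (d * (2 * d ^ 2 * n + γ * η * n ^ 2) ^ 2))) n ∧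
    -(γ * (2 * d ^ 2 + 2 * γ * η * n) * b ^ 2
        / (d * (2 * d ^ 2 * n + γ * η * n ^ 2) ^ 2)) < 0 := by
  have hn0 : 0 < n := one_pos.trans hn
  have hD : d * n * (2 * d ^ 2 + γ * η * n) ≠ 0 := by positivity
  have hsq : 0 < d * (2 * d ^ 2 * n + γ * η * n ^ 2) ^ 2 := by positivity
  refine ⟨?_, fun hroot => ?_, ?_, ?_⟩
  · simp only [mul_assoc _ γ (b ^ 2)]
    refine (hasDerivAt_const_sub_sub_one_mul_div_mul_id_mul_linear
      (b ^ 2 / (2 * d * η)) (γ * b ^ 2) hD).congr_deriv ?_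
    ring
  · have hq : 0 < γ * η * n ^ 2 - 2 * γ * η * n - 2 * d ^ 2 := by
      linarith [quadratic_pos_of_one_add_sqrt_lt (mul_pos hγ hη) hroot]
    have hb2 : 0 < b ^ 2 := by positivity
    exact div_pos (mul_pos (mul_pos hγ hq) hb2) hsq
  · refine (hasDerivAt_const_div_mul_id_mul_linear (γ * b ^ 2) hD).congr_deriv ?_
    ring
  · exact neg_neg_of_pos (by positivity)
end

section
/- For every real n ≥ 2 and d, η, γ, b_i > 0, the source-node frequency variance q_{ω,ii} = b_i²/(2dη) − (n−1)γ b_i²/(d n(2d² + γηn)) satisfies the lower bound q_{ω,ii} ≥ [1/(2dη) − γ/(d(√(γη) + √(γη + 2d²))²)] b_i². -/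
/-!
Writing `x = √(γη)` and `y = √(γη + 2d²)`, so that `2d² = y² - x²`, the claim reduces to
`(n - 1) / (n (2d² + γηn)) ≤ 1 / (x + y)²`, which follows from the identity
`n (y² - x² + x² n) - (n - 1) (x + y)² = (x (n - 1) - y)²`.
The bound is therefore sharp, with equality when `√(γη) (n - 1) = √(γη + 2d²)`.
-/

lemma sub_one_mul_add_sq_le (x y m : ℝ) :
    (m - 1) * (x + y) ^ 2 ≤ m * (y ^ 2 - x ^ 2 + x ^ 2 * m) := by
  nlinarith [sq_nonneg (x * (m - 1) - y)]

lemma sub_one_div_le_one_div_add_sq {x y m : ℝ} (hxy : 0 < x + y)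
    (hm : 0 < m * (y ^ 2 - x ^ 2 + x ^ 2 * m)) :
    (m - 1) / (m * (y ^ 2 - x ^ 2 + x ^ 2 * m)) ≤ 1 / (x + y) ^ 2 := by
  rw [div_le_div_iff₀ hm (by positivity), one_mul]
  exact sub_one_mul_add_sq_le x y m

/-- Lower bound on the source-node frequency variance for any real `n ≥ 2`. -/
theorem stmt_14 (d η γ b n : ℝ) (hd : 0 < d) (hη : 0 < η) (hγ : 0 < γ) (hn : 2 ≤ n) :
    (1 / (2 * d * η)
        - γ / (d * (Real.sqrt (γ * η) + Real.sqrt (γ * η + 2 * d ^ 2)) ^ 2)) * b ^ 2 ≤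
      b ^ 2 / (2 * d * η) - (n - 1) * γ * b ^ 2 / (d * n * (2 * d ^ 2 + γ * η * n)) := by
  set x := Real.sqrt (γ * η)
  set y := Real.sqrt (γ * η + 2 * d ^ 2)
  have hx : x ^ 2 = γ * η := Real.sq_sqrt (by positivity)
  have hy : y ^ 2 = γ * η + 2 * d ^ 2 := Real.sq_sqrt (by positivity)
  have hxy : 0 < x + y := add_pos_of_nonneg_of_pos (Real.sqrt_nonneg _) (by positivity)
  have hden : y ^ 2 - x ^ 2 + x ^ 2 * n = 2 * d ^ 2 + γ * η * n := by rw [hx, hy]; ring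
  have key : (n - 1) / (n * (2 * d ^ 2 + γ * η * n)) ≤ 1 / (x + y) ^ 2 := by
    rw [← hden]
    exact sub_one_div_le_one_div_add_sq hxy (by rw [hden]; positivity)
  set s := (x + y) ^ 2
  set D := 2 * d ^ 2 + γ * η * n
  clear_value s D
  calc (1 / (2 * d * η) - γ / (d * s)) * b ^ 2
      = b ^ 2 / (2 * d * η) - γ * b ^ 2 / d * (1 / s) := by ring
    _ ≤ b ^ 2 / (2 * d * η) - γ * b ^ 2 / d * ((n - 1) / (n * D)) := by gcongr
    _ = b ^ 2 / (2 * d * η) - (n - 1) * γ * b ^ 2 / (d * n * D) := by ring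
end

section
/- For the linearized first-order (non-uniform Kuramoto) stochastic system on the complete graph with n nodes, D = dI and uniform line weight γ, the asymptotic variance matrix of the phase differences is Q̄_δ = (1/(2dγn)) C̃ᵀ B̃² C̃, which coincides with the phase-difference variance matrix of the second-order swing system on the same graph. -/
/-!
Because all nonzero Laplacian eigenvalues of the complete graph equal `nγ/d`, the Lyapunov
equation for `Q̄_x` has the scalar solution `Q̄_x = (d / 2nγ) Ū₂ᵀ D⁻¹ B̃² Ū₂`. Conjugating back by
`Ū₂` produces the projector `Ū₂ Ū₂ᵀ = I - 𝟙𝟙ᵀ/n` on both sides of `B̃²`, and this projector is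
absorbed by the incidence matrix, whose columns are orthogonal to `𝟙`.
-/

open Matrix

namespace Matrix

variable {ι κ K : Type*} [Fintype ι] [Field K]

theorem eq_inv_smul_of_lyapunov_smul_one [DecidableEq ι] {c : K} {X W : Matrix ι ι K}
    (hX : -(c • (1 : Matrix ι ι K)) * X - X * (c • (1 : Matrix ι ι K)) + W = 0)
    (hc : 2 * c ≠ 0) : X = (2 * c)⁻¹ • W := by
  have hW : W = (2 * c) • X := by
    rw [← sub_eq_zero, ← hX, two_mul, add_smul]
    simp only [neg_mul, Matrix.smul_mul, Matrix.one_mul, Matrix.mul_smul, Matrix.mul_one]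
    abel
  rw [hW, inv_smul_smul₀ hc]

theorem transpose_mul_of_const_eq_zero {C : Matrix ι κ K} (hC : ∀ e, ∑ i, C i e = 0) (a : K) :
    Cᵀ * of (fun _ _ : ι => a) = 0 := by
  ext e j
  simp [mul_apply, ← Finset.sum_mul, hC]

theorem transpose_mul_conj_mul_eq {C : Matrix ι κ K} {m : Type*} [Fintype m]
    {U : Matrix ι m K} (hCU : Cᵀ * (U * Uᵀ) = Cᵀ) (B : Matrix ι ι K) :
    Cᵀ * (U * (Uᵀ * B * U) * Uᵀ) * C = Cᵀ * B * C := by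
  have hUC : U * Uᵀ * C = C := by
    simpa [transpose_mul] using congrArg transpose hCU
  calc Cᵀ * (U * (Uᵀ * B * U) * Uᵀ) * C = Cᵀ * (U * Uᵀ) * B * (U * Uᵀ * C) := by
        simp only [Matrix.mul_assoc]
    _ = Cᵀ * B * C := by rw [hCU, hUC]

end Matrix

def completeIncidence (ι R : Type*) [DecidableEq ι] [Preorder ι] [Zero R] [One R] [Neg R] :
    Matrix ι {p : ι × ι // p.1 < p.2} R :=
  Matrix.of fun i e => if i = e.1.1 then 1 else if i = e.1.2 then -1 else 0

theorem sum_completeIncidence {ι R : Type*} [Fintype ι] [DecidableEq ι] [Preorder ι]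
    [AddCommGroup R] [One R] (e : {p : ι × ι // p.1 < p.2}) :
    ∑ i, completeIncidence ι R i e = 0 := by
  have hne : e.1.1 ≠ e.1.2 := e.2.ne
  have hsplit : ∀ i, completeIncidence ι R i e
      = (if i = e.1.1 then 1 else 0) + (if i = e.1.2 then -1 else 0) := by
    intro i
    by_cases h : i = e.1.1
    · subst h; simp [completeIncidence, hne]
    · simp [completeIncidence, h]
  simp [hsplit, Finset.sum_add_distrib]

theorem stmt_15_general (n m : ℕ) (hn : 2 ≤ n) (d γ : ℝ) (hd : 0 < d) (hγ : 0 < γ)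
    (b : Fin n → ℝ)
    (U2 : Matrix (Fin n) (Fin m) ℝ)
    (hU2 : U2 * U2ᵀ = 1 - Matrix.of fun _ _ : Fin n => 1 / (n : ℝ))
    (Qx : Matrix (Fin m) (Fin m) ℝ)
    (hQx : -(((n : ℝ) * γ / d) • (1 : Matrix (Fin m) (Fin m) ℝ)) * Qx
        - Qx * (((n : ℝ) * γ / d) • (1 : Matrix (Fin m) (Fin m) ℝ))
        + (1 / d) • (U2ᵀ * (Matrix.diagonal fun i => (b i) ^ 2) * U2) = 0) :
    let B2 : Matrix (Fin n) (Fin n) ℝ := Matrix.diagonal fun i => (b i) ^ 2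
    let C : Matrix (Fin n) {p : Fin n × Fin n // p.1 < p.2} ℝ :=
      Matrix.of fun i e => if i = e.1.1 then 1 else if i = e.1.2 then -1 else 0
    let Qδ := Cᵀ * ((1 / d) • (U2 * Qx * U2ᵀ)) * C
    Qδ = (1 / (2 * d * γ * n)) • (Cᵀ * B2 * C) := by
  intro B2 C Qδ
  have hn0 : (0 : ℝ) < n := by positivity
  have hQx' := eq_inv_smul_of_lyapunov_smul_one hQx (by positivity)
  have hCU : Cᵀ * (U2 * U2ᵀ) = Cᵀ := by
    rw [hU2, Matrix.mul_sub, Matrix.mul_one,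
      transpose_mul_of_const_eq_zero (C := C) sum_completeIncidence, sub_zero]
  change Cᵀ * ((1 / d) • (U2 * Qx * U2ᵀ)) * C = _
  rw [hQx']
  simp only [Matrix.mul_smul, Matrix.smul_mul, smul_smul]
  rw [transpose_mul_conj_mul_eq hCU]
  congr 1
  field_simp

/-- First-order (non-uniform Kuramoto) system on the complete graph: the asymptotic
phase-difference variance matrix is `(1/(2dγn)) C̃ᵀ B̃² C̃`, coinciding with that of the
second-order swing system. -/
theorem stmt_15 (n m : ℕ) (hn : 2 ≤ n) (d γ : ℝ) (hd : 0 < d) (hγ : 0 < γ)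
    (b : Fin n → ℝ)
    (U2 : Matrix (Fin n) (Fin m) ℝ)
    (hU1 : U2ᵀ * U2 = 1)
    (hU2 : U2 * U2ᵀ = 1 - Matrix.of fun _ _ : Fin n => 1 / (n : ℝ))
    (Qx : Matrix (Fin m) (Fin m) ℝ)
    (hQx : -(((n : ℝ) * γ / d) • (1 : Matrix (Fin m) (Fin m) ℝ)) * Qx
        - Qx * (((n : ℝ) * γ / d) • (1 : Matrix (Fin m) (Fin m) ℝ))
        + (1 / d) • (U2ᵀ * (Matrix.diagonal fun i => (b i) ^ 2) * U2) = 0) :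
    let B2 : Matrix (Fin n) (Fin n) ℝ := Matrix.diagonal fun i => (b i) ^ 2
    let C : Matrix (Fin n) {p : Fin n × Fin n // p.1 < p.2} ℝ :=
      Matrix.of fun i e => if i = e.1.1 then 1 else if i = e.1.2 then -1 else 0
    let Qδ := Cᵀ * ((1 / d) • (U2 * Qx * U2ᵀ)) * C
    Qδ = (1 / (2 * d * γ * n)) • (Cᵀ * B2 * C) :=
  stmt_15_general n m hn d γ hd hγ b U2 hU2 Qx hQx
end

section
/- For the linearized stochastic swing system on the star graph with root node 1, all edges of weight γ, M = ηI, D = dI, and a single disturbance at the root (b₁ ≠ 0, b_i = 0 for i ≥ 2), the invariant-distribution variances are q_{ω,11} = [1/(2dη) − γ(n−1)/(dn(2d²+γηn))]b₁², q_{ω,ii} = γb₁²/(dn(2d²+γηn)) for i ≥ 2, and q_{δ,kk} = b₁²/(2dγn) for every line k; these coincide with the corresponding formulas for the complete graph with a single disturbed node. -/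
open Matrix

/-!
In an orthonormal eigenbasis `U` of `η⁻¹ L`, the single disturbance at the root has modal
coordinates proportional to row `0` of `U`. For the star graph the kernel of `L` is spanned by `𝟙`
and `e₀ - 𝟙 / n` is an eigenvector for `γ n`, so every mode that the root excites has eigenvalue
`0` (the kernel mode) or `γ n / η`. The modal covariance is therefore a rank-two combination of the
kernel part and the remaining part of row `0`, which `U` maps back to `𝟙 / n` and `e₀ - 𝟙 / n`;
the star incidence matrix maps `e₀ - 𝟙 / n` to the all-ones vector on lines. The variances are
read off from these vectors.
-/

section Diagonalization

theorem mul_vecMulVec_mul_transpose {ι κ R : Type*} [Fintype κ] [CommRing R] (U : Matrix ι κ R)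
    (x y : κ → R) : U * vecMulVec x y * Uᵀ = vecMulVec (U *ᵥ x) (U *ᵥ y) := by
  rw [mul_vecMulVec, vecMulVec_mul, vecMul_transpose]

theorem transpose_mul_vecMulVec_mul {ι κ R : Type*} [Fintype ι] [CommRing R] (C : Matrix ι κ R)
    (x y : ι → R) : Cᵀ * vecMulVec x y * C = vecMulVec (x ᵥ* C) (y ᵥ* C) := by
  simpa [mulVec_transpose] using mul_vecMulVec_mul_transpose Cᵀ x y

variable {ι R : Type*} [Fintype ι] [DecidableEq ι] [CommRing R] {A U : Matrix ι ι R}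
  {lam : ι → R}

theorem mul_eq_mul_diagonal_of_transpose_mul_mul_eq (hU : U * Uᵀ = 1)
    (h : Uᵀ * A * U = diagonal lam) : A * U = U * diagonal lam := by
  rw [← h, Matrix.mul_assoc, ← Matrix.mul_assoc U, hU, Matrix.one_mul]

theorem transpose_mul_eq_diagonal_mul_of_transpose_mul_mul_eq (hU : U * Uᵀ = 1)
    (h : Uᵀ * A * U = diagonal lam) : Uᵀ * A = diagonal lam * Uᵀ := by
  rw [← h, Matrix.mul_assoc (Uᵀ * A), hU, Matrix.mul_one]

theorem mulVec_transpose_apply_eq_smul (hU : U * Uᵀ = 1) (h : Uᵀ * A * U = diagonal lam)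
    (j : ι) : A *ᵥ Uᵀ j = lam j • Uᵀ j := by
  ext i
  have := congrFun (congrFun (mul_eq_mul_diagonal_of_transpose_mul_mul_eq hU h) i) j
  rw [mul_diagonal] at this
  rw [Pi.smul_apply, transpose_apply, smul_eq_mul, mul_comm, ← this]
  rfl

theorem diagonal_mulVec_transpose_mulVec_of_mulVec_eq_smul (hU : U * Uᵀ = 1)
    (h : Uᵀ * A * U = diagonal lam) {v : ι → R} {μ : R} (hv : A *ᵥ v = μ • v) :
    diagonal lam *ᵥ (Uᵀ *ᵥ v) = μ • (Uᵀ *ᵥ v) := by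
  rw [mulVec_mulVec, ← transpose_mul_eq_diagonal_mul_of_transpose_mul_mul_eq hU h,
    ← mulVec_mulVec, hv, mulVec_smul]

theorem mulVec_row_eq_single_of_mul_transpose_eq_one (hU : U * Uᵀ = 1) (k : ι) :
    U *ᵥ U k = Pi.single k 1 := by
  have : U k = Uᵀ *ᵥ Pi.single k 1 := by rw [mulVec_single_one]; rfl
  rw [this, mulVec_mulVec, hU, one_mulVec]

theorem card_mul_sq_of_col_eq (hU : Uᵀ * U = 1) {j : ι} {c : R} (h : ∀ i, U i j = c) :
    Fintype.card ι * c ^ 2 = 1 := by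
  have := congrFun (congrFun hU j) j
  simp [mul_apply, h] at this
  rw [← this]
  ring

theorem smul_transpose_mulVec_one_of_col_eq (hU : Uᵀ * U = 1) {j : ι} {c : R}
    (h : ∀ i, U i j = c) : c • (Uᵀ *ᵥ 1) = Pi.single j 1 := by
  have hcol : c • (1 : ι → R) = U *ᵥ Pi.single j 1 := by
    ext i
    simp [h]
  rw [← mulVec_smul, hcol, mulVec_mulVec, hU, one_mulVec]

theorem transpose_mul_diagonal_single_mul (U : Matrix ι ι R) (k : ι) (c : R) :
    Uᵀ * diagonal (Pi.single k c) * U = c • vecMulVec (U k) (U k) := by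
  ext i j
  rw [mul_apply]
  simp_rw [mul_diagonal, Pi.single_apply]
  simp [vecMulVec_apply]
  ring

end Diagonalization

theorem mulVec_succ_eq_mulVec_sub_single {ι R : Type*} [CommRing R] {m : ℕ}
    (U : Matrix ι (Fin (m + 1)) R) (x : Fin (m + 1) → R) :
    (of fun i (k : Fin m) => U i k.succ) *ᵥ (fun k => x k.succ) =
      U *ᵥ (x - Pi.single 0 (x 0)) := by
  ext i
  simp [mulVec, dotProduct, Fin.sum_univ_succ]

section StarGraph

variable {R : Type*} [CommRing R] {m : ℕ}

def starLaplacian (m : ℕ) (γ : R) : Matrix (Fin (m + 1)) (Fin (m + 1)) R :=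
  of fun i j => if i = j then (if i = 0 then γ * m else γ) else (if i = 0 ∨ j = 0 then -γ else 0)

def starIncidence (m : ℕ) : Matrix (Fin (m + 1)) (Fin m) R :=
  of fun i k => if i = 0 then 1 else if i = k.succ then -1 else 0

theorem starLaplacian_mulVec_zero (γ : R) (x : Fin (m + 1) → R) :
    (starLaplacian m γ *ᵥ x) 0 = γ * (m * x 0 - ∑ k : Fin m, x k.succ) := by
  simp [starLaplacian, mulVec, dotProduct, Fin.sum_univ_succ, (Fin.succ_ne_zero _).symm]
  rw [mul_sub, Finset.mul_sum]
  ring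

theorem starLaplacian_mulVec_succ (γ : R) (x : Fin (m + 1) → R) (k : Fin m) :
    (starLaplacian m γ *ᵥ x) k.succ = γ * (x k.succ - x 0) := by
  simp [starLaplacian, mulVec, dotProduct, Fin.sum_univ_succ, Fin.succ_ne_zero]
  ring

theorem apply_eq_apply_zero_of_starLaplacian_mulVec_eq_zero [IsDomain R] {γ : R} (hγ : γ ≠ 0)
    {x : Fin (m + 1) → R} (hx : starLaplacian m γ *ᵥ x = 0) (i : Fin (m + 1)) : x i = x 0 := by
  induction i using Fin.cases with
  | zero => rfl
  | succ k =>
    have := congrFun hx k.succ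
    rw [starLaplacian_mulVec_succ, Pi.zero_apply] at this
    exact sub_eq_zero.1 ((mul_eq_zero.1 this).resolve_left hγ)

theorem starLaplacian_mulVec_single_sub_one (γ : R) :
    starLaplacian m γ *ᵥ (Pi.single 0 ((m : R) + 1) - 1) =
      (γ * (m + 1)) • (Pi.single 0 ((m : R) + 1) - 1) := by
  ext i
  induction i using Fin.cases with
  | zero => simp [starLaplacian_mulVec_zero]; ring
  | succ k => simp [starLaplacian_mulVec_succ, Fin.succ_ne_zero]; ring

theorem vecMul_starIncidence (x : Fin (m + 1) → R) (k : Fin m) :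
    (x ᵥ* starIncidence m) k = x 0 - x k.succ := by
  simp [starIncidence, vecMul, dotProduct, Fin.sum_univ_succ, Fin.succ_ne_zero]
  ring

end StarGraph

section StarEigenbasis

variable {m : ℕ} {γ η : ℝ} {U : Matrix (Fin (m + 1)) (Fin (m + 1)) ℝ} {lam : Fin (m + 1) → ℝ}

theorem eigenbasis_col_zero_eq (hγ : γ ≠ 0) (hη : η ≠ 0) (hU : U * Uᵀ = 1)
    (h : Uᵀ * ((1 / η) • starLaplacian m γ) * U = diagonal lam) (hlam0 : lam 0 = 0)
    (i : Fin (m + 1)) : U i 0 = U 0 0 := by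
  have hker := mulVec_transpose_apply_eq_smul hU h 0
  rw [hlam0, zero_smul, smul_mulVec, smul_eq_zero] at hker
  exact apply_eq_apply_zero_of_starLaplacian_mulVec_eq_zero hγ
    (hker.resolve_left (one_div_ne_zero hη)) i

theorem eigenbasis_card_mul_sq_apply_zero_zero (hγ : γ ≠ 0) (hη : η ≠ 0) (hU1 : U * Uᵀ = 1)
    (hU2 : Uᵀ * U = 1) (h : Uᵀ * ((1 / η) • starLaplacian m γ) * U = diagonal lam)
    (hlam0 : lam 0 = 0) : ((m : ℝ) + 1) * U 0 0 ^ 2 = 1 := by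
  simpa using card_mul_sq_of_col_eq hU2 (eigenbasis_col_zero_eq hγ hη hU1 h hlam0)

theorem eigenbasis_mulVec_single_zero (hγ : γ ≠ 0) (hη : η ≠ 0) (hU1 : U * Uᵀ = 1)
    (hU2 : Uᵀ * U = 1) (h : Uᵀ * ((1 / η) • starLaplacian m γ) * U = diagonal lam)
    (hlam0 : lam 0 = 0) : U *ᵥ Pi.single 0 (U 0 0) = fun _ => 1 / ((m : ℝ) + 1) := by
  ext i
  simp [eigenbasis_col_zero_eq hγ hη hU1 h hlam0 i]
  exact eq_inv_of_mul_eq_one_left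
    (by linear_combination eigenbasis_card_mul_sq_apply_zero_zero hγ hη hU1 hU2 h hlam0)

theorem diagonal_mulVec_eigenbasis_row_zero_sub_single (hγ : γ ≠ 0) (hη : η ≠ 0)
    (hU1 : U * Uᵀ = 1) (hU2 : Uᵀ * U = 1)
    (h : Uᵀ * ((1 / η) • starLaplacian m γ) * U = diagonal lam) (hlam0 : lam 0 = 0) :
    diagonal lam *ᵥ (U 0 - Pi.single 0 (U 0 0)) =
      (γ * (m + 1) / η) • (U 0 - Pi.single 0 (U 0 0)) := by
  set n : ℝ := m + 1
  have hn : n * U 0 0 ^ 2 = 1 := eigenbasis_card_mul_sq_apply_zero_zero hγ hη hU1 hU2 h hlam0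
  have hone := smul_transpose_mulVec_one_of_col_eq hU2 (eigenbasis_col_zero_eq hγ hη hU1 h hlam0)
  have hv : ((1 / η) • starLaplacian m γ) *ᵥ (Pi.single 0 n - 1) =
      (γ * n / η) • (Pi.single 0 n - 1) := by
    rw [smul_mulVec, starLaplacian_mulVec_single_sub_one, smul_smul]
    congr 1
    ring
  have hUv : Uᵀ *ᵥ (Pi.single 0 n - 1) = n • (U 0 - Pi.single 0 (U 0 0)) := by
    have hsingle : Uᵀ *ᵥ Pi.single 0 n = n • U 0 := by
      ext j
      simp [mul_comm]
    have hconst : Uᵀ *ᵥ 1 = n • Pi.single 0 (U 0 0) := by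
      calc Uᵀ *ᵥ 1 = (n * U 0 0 ^ 2) • Uᵀ *ᵥ 1 := by rw [hn, one_smul]
        _ = (n * U 0 0) • Pi.single 0 1 := by rw [← hone, smul_smul]; ring_nf
        _ = n • Pi.single 0 (U 0 0) := by ext j; simp [Pi.single_apply]
    rw [mulVec_sub, hsingle, hconst, smul_sub]
  have key := diagonal_mulVec_transpose_mulVec_of_mulVec_eq_smul hU1 h hv
  rw [hUv, mulVec_smul, smul_comm] at key
  exact smul_right_injective _ (by positivity) key

theorem eigenvalue_eq_of_row_zero_ne_zero (hγ : γ ≠ 0) (hη : η ≠ 0) (hU1 : U * Uᵀ = 1)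
    (hU2 : Uᵀ * U = 1) (h : Uᵀ * ((1 / η) • starLaplacian m γ) * U = diagonal lam)
    (hlam0 : lam 0 = 0) {j : Fin (m + 1)} (hj : U 0 j ≠ 0) :
    lam j = if j = 0 then 0 else γ * (m + 1) / η := by
  split_ifs with hj0
  · rw [hj0, hlam0]
  · have := congrFun (diagonal_mulVec_eigenbasis_row_zero_sub_single hγ hη hU1 hU2 h hlam0) j
    simp [mulVec_diagonal, hj0] at this
    exact this.resolve_right hj

theorem eigenbasis_tail_mulVec_row_zero_tail (hγ : γ ≠ 0) (hη : η ≠ 0) (hU1 : U * Uᵀ = 1)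
    (hU2 : Uᵀ * U = 1) (h : Uᵀ * ((1 / η) • starLaplacian m γ) * U = diagonal lam)
    (hlam0 : lam 0 = 0) :
    (of fun i (k : Fin m) => U i k.succ) *ᵥ (fun k => U 0 k.succ) =
      Pi.single 0 1 - fun _ => 1 / ((m : ℝ) + 1) := by
  rw [mulVec_succ_eq_mulVec_sub_single, mulVec_sub,
    mulVec_row_eq_single_of_mul_transpose_eq_one hU1,
    eigenbasis_mulVec_single_zero hγ hη hU1 hU2 h hlam0]

end StarEigenbasis

section ModalCovariance

variable {m : ℕ} {α μ s : ℝ} {u lam : Fin (m + 1) → ℝ}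

theorem modalCoeff_mul_eq (hα : 0 < α) (hμ : 0 < μ)
    (hlam : ∀ j, u j ≠ 0 → lam j = if j = 0 then 0 else μ) {i j : Fin (m + 1)}
    (hij : ¬(i = 0 ∧ j = 0)) :
    α * (lam i + lam j) / ((lam i - lam j) ^ 2 + 2 * α ^ 2 * (lam i + lam j)) * (u i * u j) =
      (if (i = 0 ↔ j = 0) then 1 / (2 * α) else α / (μ + 2 * α ^ 2)) * (u i * u j) := by
  rcases eq_or_ne (u i * u j) 0 with hu | hu
  · simp [hu]
  obtain ⟨hi, hj⟩ := mul_ne_zero_iff.1 hu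
  rw [hlam i hi, hlam j hj]
  congr 1
  rcases eq_or_ne i 0 with rfl | hi0 <;> rcases eq_or_ne j 0 with rfl | hj0
  · exact absurd ⟨rfl, rfl⟩ hij
  · simp [hj0]
    field_simp
  · simp [hi0]
    field_simp
  · simp [hi0, hj0]
    field_simp

theorem modalCov_eq (hα : 0 < α) (hμ : 0 < μ)
    (hlam : ∀ j, u j ≠ 0 → lam j = if j = 0 then 0 else μ)
    {W : Matrix (Fin (m + 1)) (Fin (m + 1)) ℝ}
    (hW : ∀ i j, W i j = s * (u i * u j)) :
    (of fun i j => if i = 0 ∧ j = 0 then W 0 0 / (2 * α)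
        else α * (lam i + lam j) / ((lam i - lam j) ^ 2 + 2 * α ^ 2 * (lam i + lam j)) * W i j) =
      s • ((1 / (2 * α)) • vecMulVec u u + (α / (μ + 2 * α ^ 2) - 1 / (2 * α)) •
        (vecMulVec (Pi.single 0 (u 0)) (u - Pi.single 0 (u 0)) +
          vecMulVec (u - Pi.single 0 (u 0)) (Pi.single 0 (u 0)))) := by
  ext i j
  by_cases hij : i = 0 ∧ j = 0
  · obtain ⟨rfl, rfl⟩ := hij
    simp [hW, vecMulVec_apply]
    ring
  rw [of_apply, if_neg hij, hW, mul_left_comm, modalCoeff_mul_eq hα hμ hlam hij]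
  rcases eq_or_ne i 0 with rfl | hi0 <;> rcases eq_or_ne j 0 with rfl | hj0
  · exact absurd ⟨rfl, rfl⟩ hij
  · simp [hj0, vecMulVec_apply, -mul_eq_mul_left_iff]
    ring
  · simp [hi0, vecMulVec_apply, -mul_eq_mul_left_iff]
    ring
  · simp [hi0, hj0, vecMulVec_apply]

theorem modalPhaseCov_eq (hα : 0 < α) (hμ : 0 < μ)
    (hlam : ∀ j, u j ≠ 0 → lam j = if j = 0 then 0 else μ)
    {W : Matrix (Fin (m + 1)) (Fin (m + 1)) ℝ}
    (hW : ∀ i j, W i j = s * (u i * u j)) :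
    (of fun k q : Fin m => 2 * α / ((lam k.succ - lam q.succ) ^ 2 +
        2 * α ^ 2 * (lam k.succ + lam q.succ)) * W k.succ q.succ) =
      (s / (2 * α * μ)) • vecMulVec (fun k => u k.succ) (fun k => u k.succ) := by
  ext k q
  simp only [of_apply, hW, Matrix.smul_apply, vecMulVec_apply, smul_eq_mul]
  rcases eq_or_ne (u k.succ * u q.succ) 0 with hu | hu
  · rw [hu]; ring
  obtain ⟨hk, hq⟩ := mul_ne_zero_iff.1 hu
  rw [hlam _ hk, hlam _ hq, if_neg (Fin.succ_ne_zero k), if_neg (Fin.succ_ne_zero q)]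
  field_simp
  ring

theorem mul_modalCov_mul_transpose_apply_self {U : Matrix (Fin (m + 1)) (Fin (m + 1)) ℝ} {p : ℝ}
    (hU : U * Uᵀ = 1) (hp : U *ᵥ Pi.single 0 (U 0 0) = fun _ => p) (c₁ c₂ : ℝ)
    (i : Fin (m + 1)) :
    (U * (s • (c₁ • vecMulVec (U 0) (U 0) + c₂ •
        (vecMulVec (Pi.single 0 (U 0 0)) (U 0 - Pi.single 0 (U 0 0)) +
          vecMulVec (U 0 - Pi.single 0 (U 0 0)) (Pi.single 0 (U 0 0))))) * Uᵀ :
        Matrix (Fin (m + 1)) (Fin (m + 1)) ℝ) i i =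
      s * (c₁ * (if i = 0 then 1 else 0) + 2 * c₂ * p * ((if i = 0 then 1 else 0) - p)) := by
  simp only [Matrix.mul_smul, Matrix.smul_mul, Matrix.mul_add, Matrix.add_mul,
    mul_vecMulVec_mul_transpose, mulVec_sub, mulVec_row_eq_single_of_mul_transpose_eq_one hU, hp,
    Matrix.smul_apply, Matrix.add_apply, vecMulVec_apply, smul_eq_mul, Pi.sub_apply,
    Pi.single_apply]
  split_ifs <;> ring

theorem starIncidence_transpose_mul_mul_apply_self {ι : Type*} [Fintype ι]
    {V : Matrix (Fin (m + 1)) ι ℝ} {y : ι → ℝ} {p : ℝ}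
    (hV : V *ᵥ y = Pi.single 0 1 - fun _ => p) (t : ℝ) (k : Fin m) :
    ((starIncidence m : Matrix (Fin (m + 1)) (Fin m) ℝ)ᵀ * (t • (V * (s • vecMulVec y y) * Vᵀ)) *
      (starIncidence m : Matrix (Fin (m + 1)) (Fin m) ℝ)) k k = t * s := by
  simp only [Matrix.mul_smul, Matrix.smul_mul, mul_vecMulVec_mul_transpose, hV,
    transpose_mul_vecMulVec_mul]
  simp [vecMulVec_apply, vecMul_starIncidence, Fin.succ_ne_zero]

end ModalCovariance

theorem stmt_16_general (m : ℕ) (η d γ b1 : ℝ)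
    (hη : 0 < η) (hd : 0 < d) (hγ : 0 < γ)
    (L U : Matrix (Fin (m + 1)) (Fin (m + 1)) ℝ)
    (hL : ∀ i j, L i j =
      if i = j then (if i = 0 then γ * (m : ℝ) else γ)
      else (if i = 0 ∨ j = 0 then -γ else 0))
    (hU1 : U * Uᵀ = 1) (hU2 : Uᵀ * U = 1)
    (lam : Fin (m + 1) → ℝ)
    (hdiag : Uᵀ * ((1 / η) • L) * U = Matrix.diagonal lam)
    (hlam0 : lam 0 = 0) :
    let n : ℝ := (m : ℝ) + 1
    let α := d / η
    let B2 : Matrix (Fin (m + 1)) (Fin (m + 1)) ℝ :=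
      Matrix.diagonal fun i => if i = 0 then b1 ^ 2 else 0
    let W := Uᵀ * ((1 / η) • B2) * U
    let χ : Fin (m + 1) → Fin (m + 1) → ℝ :=
      fun i j => (lam i - lam j) ^ 2 + 2 * α ^ 2 * (lam i + lam j)
    let R : Matrix (Fin (m + 1)) (Fin (m + 1)) ℝ :=
      Matrix.of fun i j =>
        if i = 0 ∧ j = 0 then W 0 0 / (2 * α)
        else (α * (lam i + lam j) / χ i j) * W i j
    let Qω := (1 / η) • (U * R * Uᵀ)
    let G : Matrix (Fin m) (Fin m) ℝ :=
      Matrix.of fun k q => (2 * α / χ k.succ q.succ) * W k.succ q.succ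
    let Uhat : Matrix (Fin (m + 1)) (Fin m) ℝ := Matrix.of fun i k => U i k.succ
    let C : Matrix (Fin (m + 1)) (Fin m) ℝ :=
      Matrix.of fun i k => if i = 0 then 1 else if i = k.succ then -1 else 0
    let Qδ := Cᵀ * ((1 / η) • (Uhat * G * Uhatᵀ)) * C
    Qω 0 0 = (1 / (2 * d * η) - γ * (n - 1) / (d * n * (2 * d ^ 2 + γ * η * n))) * b1 ^ 2 ∧
    (∀ i : Fin (m + 1), i ≠ 0 →
      Qω i i = γ * b1 ^ 2 / (d * n * (2 * d ^ 2 + γ * η * n))) ∧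
    (∀ k : Fin m, Qδ k k = b1 ^ 2 / (2 * d * γ * n)) := by
  intro n α B2 W χ R Qω G Uhat C Qδ
  obtain rfl : L = starLaplacian m γ := Matrix.ext hL
  have hα : 0 < α := div_pos hd hη
  have hμ : 0 < γ * n / η := by positivity
  have hlam : ∀ j, U 0 j ≠ 0 → lam j = if j = 0 then 0 else γ * n / η :=
    fun j => eigenvalue_eq_of_row_zero_ne_zero hγ.ne' hη.ne' hU1 hU2 hdiag hlam0
  have hp := eigenbasis_mulVec_single_zero hγ.ne' hη.ne' hU1 hU2 hdiag hlam0
  have hW (i j) : W i j = b1 ^ 2 / η * (U 0 i * U 0 j) := by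
    simp [W, B2, ← Pi.single_apply, transpose_mul_diagonal_single_mul, vecMulVec_apply]
    ring
  have hR : R = _ := modalCov_eq hα hμ hlam hW
  have hG : G = _ := modalPhaseCov_eq hα hμ hlam hW
  refine ⟨?_, fun i hi => ?_, fun k => ?_⟩
  · simp only [Qω, Matrix.smul_apply, hR, mul_modalCov_mul_transpose_apply_self hU1 hp, if_true,
      smul_eq_mul]
    simp only [α, n]
    field_simp
    ring
  · simp only [Qω, Matrix.smul_apply, hR, mul_modalCov_mul_transpose_apply_self hU1 hp, hi,
      if_false, smul_eq_mul]
    simp only [α, n]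
    field_simp
    ring
  · simp only [Qδ, hG, Uhat, show C = starIncidence m from rfl,
      starIncidence_transpose_mul_mul_apply_self
      (eigenbasis_tail_mulVec_row_zero_tail hγ.ne' hη.ne' hU1 hU2 hdiag hlam0)]
    simp only [α, n]
    field_simp

/-- Star graph on `m+1` nodes (root `0`), uniform edge weight `γ`, `M = ηI`, `D = dI`,
single disturbance `b₁` at the root: the invariant-distribution frequency and
phase-difference variances coincide with the complete-graph formulas. -/
theorem stmt_16 (m : ℕ) (hm : 2 ≤ m) (η d γ b1 : ℝ)
    (hη : 0 < η) (hd : 0 < d) (hγ : 0 < γ) (hb1 : b1 ≠ 0)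
    (L U : Matrix (Fin (m + 1)) (Fin (m + 1)) ℝ)
    (hL : ∀ i j, L i j =
      if i = j then (if i = 0 then γ * (m : ℝ) else γ)
      else (if i = 0 ∨ j = 0 then -γ else 0))
    (hU1 : U * Uᵀ = 1) (hU2 : Uᵀ * U = 1)
    (lam : Fin (m + 1) → ℝ)
    (hdiag : Uᵀ * ((1 / η) • L) * U = Matrix.diagonal lam)
    (hlam0 : lam 0 = 0) (hlampos : ∀ i : Fin (m + 1), i ≠ 0 → 0 < lam i) :
    let n : ℝ := (m : ℝ) + 1
    let α := d / η
    let B2 : Matrix (Fin (m + 1)) (Fin (m + 1)) ℝ :=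
      Matrix.diagonal fun i => if i = 0 then b1 ^ 2 else 0
    let W := Uᵀ * ((1 / η) • B2) * U
    let χ : Fin (m + 1) → Fin (m + 1) → ℝ :=
      fun i j => (lam i - lam j) ^ 2 + 2 * α ^ 2 * (lam i + lam j)
    let R : Matrix (Fin (m + 1)) (Fin (m + 1)) ℝ :=
      Matrix.of fun i j =>
        if i = 0 ∧ j = 0 then W 0 0 / (2 * α)
        else (α * (lam i + lam j) / χ i j) * W i j
    let Qω := (1 / η) • (U * R * Uᵀ)
    let G : Matrix (Fin m) (Fin m) ℝ :=
      Matrix.of fun k q => (2 * α / χ k.succ q.succ) * W k.succ q.succ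
    let Uhat : Matrix (Fin (m + 1)) (Fin m) ℝ := Matrix.of fun i k => U i k.succ
    let C : Matrix (Fin (m + 1)) (Fin m) ℝ :=
      Matrix.of fun i k => if i = 0 then 1 else if i = k.succ then -1 else 0
    let Qδ := Cᵀ * ((1 / η) • (Uhat * G * Uhatᵀ)) * C
    Qω 0 0 = (1 / (2 * d * η) - γ * (n - 1) / (d * n * (2 * d ^ 2 + γ * η * n))) * b1 ^ 2 ∧
    (∀ i : Fin (m + 1), i ≠ 0 →
      Qω i i = γ * b1 ^ 2 / (d * n * (2 * d ^ 2 + γ * η * n))) ∧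
    (∀ k : Fin m, Qδ k k = b1 ^ 2 / (2 * d * γ * n)) :=
  stmt_16_general m η d γ b1 hη hd hγ L U hL hU1 hU2 lam hdiag hlam0
end

section
/- In the star graph with a single disturbance at node 2, the source-node frequency variance q_{ω,22} = b₂²/(2dη) − γb₂²/(dn(2d²+γηn)) − γ(n−2)b₂²/(dn(2d²(n+1)+γη(n−1)²)) − γ²η(n−2)b₂²/(dn(2d²+γη)(2d²+γηn)) satisfies ∂q_{ω,22}/∂γ < 0 for all γ > 0, and lim_{γ→∞} q_{ω,22} = b₂²/(2dη) − (b₂²/(dη))(1/n − 1/(n²(n−1)²)). -/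
/-!
Each of the three correction terms of `q` is a positive multiple of `γ / (p + γ r)` with `p > 0`,
or of a product of two such factors. These saturating functions are strictly increasing on
`γ > 0` with limit `1 / r`, so `q` strictly decreases and its limit is read off termwise.
-/

open Filter Topology

noncomputable def saturation (p r x : ℝ) : ℝ := x / (p + x * r)

section Saturation

variable {p r x : ℝ}

theorem hasDerivAt_saturation (hx : p + x * r ≠ 0) :
    HasDerivAt (saturation p r) (p / (p + x * r) ^ 2) x :=
  ((hasDerivAt_id' x).div (((hasDerivAt_id' x).mul_const r).const_add p) hx).congr_deriv
    (by ring)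

theorem saturation_pos (hp : 0 < p) (hr : 0 ≤ r) (hx : 0 < x) : 0 < saturation p r x := by
  unfold saturation
  positivity

theorem tendsto_saturation_atTop (hr : 0 < r) :
    Tendsto (saturation p r) atTop (𝓝 r⁻¹) := by
  have h : Tendsto (fun x : ℝ => (p * x⁻¹ + r)⁻¹) atTop (𝓝 (p * 0 + r)⁻¹) :=
    ((tendsto_inv_atTop_zero.const_mul p).add_const r).inv₀ (by simpa using hr.ne')
  rw [mul_zero, zero_add] at h
  refine h.congr' ?_
  filter_upwards [eventually_gt_atTop 0] with x hx
  rw [saturation]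
  field_simp

end Saturation

/-- Star graph with a single disturbance at leaf node 2: the source-node frequency
variance is strictly decreasing in the line weight `γ`, with the stated limit as
`γ → ∞`. -/
theorem stmt_18 (n d η b : ℝ) (hn : 3 ≤ n) (hd : 0 < d) (hη : 0 < η) (hb : b ≠ 0) :
    let q : ℝ → ℝ := fun γ =>
      b ^ 2 / (2 * d * η) - γ * b ^ 2 / (d * n * (2 * d ^ 2 + γ * η * n))
        - γ * (n - 2) * b ^ 2 / (d * n * (2 * d ^ 2 * (n + 1) + γ * η * (n - 1) ^ 2))
        - γ ^ 2 * η * (n - 2) * b ^ 2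
          / (d * n * (2 * d ^ 2 + γ * η) * (2 * d ^ 2 + γ * η * n))
    (∀ γ : ℝ, 0 < γ → deriv q γ < 0) ∧
    Tendsto q atTop
      (nhds (b ^ 2 / (2 * d * η)
        - (b ^ 2 / (d * η)) * (1 / n - 1 / (n ^ 2 * (n - 1) ^ 2)))) := by
  intro q
  have hn0 : 0 < n := by linarith
  have hn1 : 0 < n - 1 := by linarith
  have hn2 : 0 < n - 2 := by linarith
  set S₁ := saturation (2 * d ^ 2) (η * n)
  set S₂ := saturation (2 * d ^ 2 * (n + 1)) (η * (n - 1) ^ 2)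
  set S₃ := saturation (2 * d ^ 2) η
  have hq : q = fun γ => b ^ 2 / (2 * d * η) - b ^ 2 / (d * n) * S₁ γ
      - (n - 2) * b ^ 2 / (d * n) * S₂ γ - η * (n - 2) * b ^ 2 / (d * n) * (S₃ γ * S₁ γ) := by
    funext γ
    simp only [q, S₁, S₂, S₃, saturation, div_eq_mul_inv, mul_inv]
    ring
  constructor
  · intro γ hγ
    have h₁ := hasDerivAt_saturation (p := 2 * d ^ 2) (r := η * n) (x := γ) (by positivity)
    have h₂ := hasDerivAt_saturation (p := 2 * d ^ 2 * (n + 1)) (r := η * (n - 1) ^ 2) (x := γ)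
      (by positivity)
    have h₃ := hasDerivAt_saturation (p := 2 * d ^ 2) (r := η) (x := γ) (by positivity)
    have hS₁ : 0 < S₁ γ := saturation_pos (by positivity) (by positivity) hγ
    have hS₃ : 0 < S₃ γ := saturation_pos (by positivity) (by positivity) hγ
    have hD := (((hasDerivAt_const γ (b ^ 2 / (2 * d * η))).sub
      (h₁.const_mul (b ^ 2 / (d * n)))).sub (h₂.const_mul ((n - 2) * b ^ 2 / (d * n)))).sub
      ((h₃.mul h₁).const_mul (η * (n - 2) * b ^ 2 / (d * n)))
    rw [hq]
    refine hD.deriv.trans_lt ?_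
    rw [zero_sub, sub_sub, ← neg_add', neg_lt_zero]
    positivity
  · have t₁ := tendsto_saturation_atTop (p := 2 * d ^ 2) (by positivity : 0 < η * n)
    have t₂ := tendsto_saturation_atTop (p := 2 * d ^ 2 * (n + 1))
      (by positivity : 0 < η * (n - 1) ^ 2)
    have t₃ := tendsto_saturation_atTop (p := 2 * d ^ 2) hη
    rw [hq]
    convert ((tendsto_const_nhds.sub (t₁.const_mul (b ^ 2 / (d * n)))).sub
      (t₂.const_mul ((n - 2) * b ^ 2 / (d * n)))).sub
      ((t₃.mul t₁).const_mul (η * (n - 2) * b ^ 2 / (d * n))) using 2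
    field_simp
    ring
end
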